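/- arXiv:cs/0305051 — 6 statements merged into one kernel-verified Lean document; each statement's English description precedes it below -/
import Mathlib

section
/- For any dimension d ≥ 1, any positive integers n_1, …, n_d, and any arrangement A of an n_1 × n_2 × ⋯ × n_d matrix, there exists a monotonic arrangement A' of the same matrix with spread(A') ≤ spread(A). In particular, the minimum possible spread over all arrangements is attained by a monotonic arrangement. -/
/-- Two cells of the `n 0 × ⋯ × n (d-1)` matrix lie in a common line:
they agree in all coordinates except (possibly) one. -/
def sameLine {d : ℕ} {n : Fin d → ℕ} (c c' : (i : Fin d) → Fin (n i)) : Prop :=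
  ∃ t : Fin d, ∀ s : Fin d, s ≠ t → c s = c' s

instance {d : ℕ} {n : Fin d → ℕ} (c c' : (i : Fin d) → Fin (n i)) :
    Decidable (sameLine c c') := by
  unfold sameLine; infer_instance

/-- The spread of an arrangement (= bijection from cells to `{0,…,∏ nᵢ − 1}`,
a zero-based version of `{1,…,∏ nᵢ}`): the maximum difference of values over
all pairs of cells lying in a common line. -/
def spread {d : ℕ} {n : Fin d → ℕ}
    (A : ((i : Fin d) → Fin (n i)) ≃ Fin (∏ i, n i)) : ℕ :=
  Finset.sup Finset.univ
    (fun p : ((i : Fin d) → Fin (n i)) × ((i : Fin d) → Fin (n i)) =>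
      if sameLine p.1 p.2 then Nat.dist (A p.1) (A p.2) else 0)

/-- An arrangement is monotonic if its values strictly increase along every line. -/
def monotonic {d : ℕ} {n : Fin d → ℕ}
    (A : ((i : Fin d) → Fin (n i)) ≃ Fin (∏ i, n i)) : Prop :=
  ∀ c c' : (i : Fin d) → Fin (n i), ∀ t : Fin d,
    (∀ s : Fin d, s ≠ t → c s = c' s) → c t < c' t → A c < A c'

/-!
Sort the entries of every line in direction `t`, successively for all directions `t`.
Afterwards the lines in direction `t` increase, and sorting in a later direction keeps them
increasing because the `k`-th smallest entry of a pointwise smaller tuple is smaller. Sorting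
never increases the spread: inside a line being sorted the entries are only permuted, and if two
parallel lines differ pointwise by at most `M`, so do their `k`-th smallest entries.
-/

open Finset Function

namespace Tuple

variable {m : ℕ} {α β : Type*} [LinearOrder α] [LinearOrder β]

theorem lt_card_le_iff_apply_sort_le (f : Fin m → α) (k : Fin m) (a : α) :
    k < #{i | f i ≤ a} ↔ f (sort f k) ≤ a := by
  have h := lt_card_le_iff_apply_le_of_monotone (j := k) (a := a) (monotone_sort f)
  rwa [card_equiv (t := {i | f i ≤ a}) (sort f) (by simp), comp_apply] at h

theorem lt_card_lt_iff_apply_sort_lt (f : Fin m → α) (k : Fin m) (a : α) :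
    k < #{i | f i < a} ↔ f (sort f k) < a := by
  have h := lt_card_lt_iff_apply_lt_of_monotone (j := k) (a := a) (monotone_sort f)
  rwa [card_equiv (t := {i | f i < a}) (sort f) (by simp), comp_apply] at h

theorem rel_apply_sort {R : α → β → Prop}
    (hR : ∀ ⦃a a' b b'⦄, a' ≤ a → b ≤ b' → R a b → R a' b')
    {f : Fin m → α} {g : Fin m → β} (hfg : ∀ i, R (f i) (g i)) (k : Fin m) :
    R (f (sort f k)) (g (sort g k)) := by
  set a := f (sort f k)
  set b := g (sort g k)
  by_contra hab
  have hsub : ({i | g i ≤ b} : Finset (Fin m)) ⊆ ({i | f i < a} : Finset (Fin m)) := by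
    intro i
    simp only [mem_filter_univ]
    exact fun hi => lt_of_not_ge fun ha => hab (hR ha hi (hfg i))
  have hg : k < #{i | g i ≤ b} := (lt_card_le_iff_apply_sort_le g k b).2 le_rfl
  have hf : ¬ k < #{i | f i < a} := (lt_card_lt_iff_apply_sort_lt f k a).not.2 (lt_irrefl a)
  exact hf (hg.trans_le (card_le_card hsub))

end Tuple

theorem Nat.dist_le_iff (a b M : ℕ) : Nat.dist a b ≤ M ↔ a ≤ b + M ∧ b ≤ a + M := by
  unfold Nat.dist; omega

namespace Function

variable {ι : Type*} [DecidableEq ι] {β : ι → Type*} {f g : (i : ι) → β i}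

theorem update_eq_update_of_eq_off {t : ι} (h : ∀ s, s ≠ t → f s = g s) (x : β t) :
    update f t x = update g t x := by
  funext s
  by_cases hs : s = t
  · subst hs; simp
  · simp [update_of_ne hs, h s hs]

theorem update_eq_off_of_eq_off {s t : ι} (h : ∀ u, u ≠ s → f u = g u) (x : β t) (u : ι)
    (hu : u ≠ s) : update f t x u = update g t x u := by
  by_cases hut : u = t
  · subst hut; simp
  · simp [update_of_ne hut, h u hu]

end Function

section Arrangement

variable {d : ℕ} {n : Fin d → ℕ}

abbrev Cell (n : Fin d → ℕ) := (i : Fin d) → Fin (n i)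

abbrev Arrangement (n : Fin d → ℕ) := Cell n ≃ Fin (∏ i, n i)

def lineValues (A : Arrangement n) (t : Fin d) (c : Cell n) : Fin (n t) → Fin (∏ i, n i) :=
  fun j => A (update c t j)

theorem lineValues_congr (A : Arrangement n) {t : Fin d} {c c' : Cell n}
    (h : ∀ s, s ≠ t → c s = c' s) : lineValues A t c = lineValues A t c' :=
  funext (fun j => congrArg A (update_eq_update_of_eq_off h j))

theorem lineValues_injective (A : Arrangement n) (t : Fin d) (c : Cell n) :
    Injective (lineValues A t c) :=
  A.injective.comp (update_injective c t)

def sortLinesEquiv (t : Fin d) (A : Arrangement n) : Cell n ≃ Cell n where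
  toFun c := update c t (Tuple.sort (lineValues A t c) (c t))
  invFun c := update c t ((Tuple.sort (lineValues A t c)).symm (c t))
  left_inv c := by
    dsimp only
    rw [lineValues_congr A fun s hs => update_of_ne hs _ c]
    simp
  right_inv c := by
    dsimp only
    rw [lineValues_congr A fun s hs => update_of_ne hs _ c]
    simp

def sortLines (t : Fin d) (A : Arrangement n) : Arrangement n := (sortLinesEquiv t A).trans A

theorem sortLines_apply (t : Fin d) (A : Arrangement n) (c : Cell n) :
    sortLines t A c = lineValues A t c (Tuple.sort (lineValues A t c) (c t)) := rfl

def MonotoneAlong (t : Fin d) (A : Arrangement n) : Prop :=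
  ∀ c c' : Cell n, (∀ s, s ≠ t → c s = c' s) → c t < c' t → A c < A c'

theorem monotonic_iff_forall_monotoneAlong (A : Arrangement n) :
    monotonic A ↔ ∀ t, MonotoneAlong t A :=
  ⟨fun h t c c' => h c c' t, fun h c c' t => h t c c'⟩

theorem monotoneAlong_sortLines_self (t : Fin d) (A : Arrangement n) :
    MonotoneAlong t (sortLines t A) := by
  intro c c' h hlt
  rw [sortLines_apply, sortLines_apply, lineValues_congr A h]
  have hinj := (lineValues_injective A t c').comp (Tuple.sort (lineValues A t c')).injective
  exact (Tuple.monotone_sort _).strictMono_of_injective hinj hlt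

theorem MonotoneAlong.sortLines {s : Fin d} {A : Arrangement n} (hA : MonotoneAlong s A)
    (t : Fin d) : MonotoneAlong s (sortLines t A) := by
  by_cases hst : s = t
  · subst hst
    exact monotoneAlong_sortLines_self s A
  intro c c' h hlt
  have hline : ∀ j, lineValues A t c j < lineValues A t c' j := fun j =>
    hA (update c t j) (update c' t j) (update_eq_off_of_eq_off h j)
      (by simpa [update_of_ne hst] using hlt)
  rw [sortLines_apply, sortLines_apply, ← h t (Ne.symm hst)]
  exact Tuple.rel_apply_sort (fun _ _ _ _ ha hb hab => (ha.trans_lt hab).trans_le hb) hline _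

theorem spread_le_iff (A : Arrangement n) (M : ℕ) :
    spread A ≤ M ↔ ∀ c c' : Cell n, sameLine c c' → Nat.dist (A c) (A c') ≤ M := by
  simp only [spread, Finset.sup_le_iff, mem_univ, true_implies, Prod.forall]
  refine forall₂_congr fun c c' => ?_
  split_ifs with h <;> simp [h]

theorem dist_le_spread (A : Arrangement n) {c c' : Cell n} (h : sameLine c c') :
    Nat.dist (A c) (A c') ≤ spread A :=
  (spread_le_iff A _).1 le_rfl c c' h

theorem spread_sortLines_le (t : Fin d) (A : Arrangement n) :
    spread (sortLines t A) ≤ spread A := by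
  rw [spread_le_iff]
  rintro c c' ⟨s, h⟩
  rw [sortLines_apply, sortLines_apply]
  by_cases hst : s = t
  · subst hst
    rw [lineValues_congr A h]
    exact dist_le_spread A ⟨s, fun u hu => by simp [update_of_ne hu]⟩
  have hline : ∀ j, Nat.dist (lineValues A t c j) (lineValues A t c' j) ≤ spread A := fun j =>
    dist_le_spread A ⟨s, update_eq_off_of_eq_off h j⟩
  have hR : ∀ ⦃a a' b b' : Fin (∏ i, n i)⦄, a' ≤ a → b ≤ b' →
      (a : ℕ) ≤ b + spread A → (a' : ℕ) ≤ b' + spread A := fun _ _ _ _ ha hb hab => by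
    have := Fin.val_le_of_le ha; have := Fin.val_le_of_le hb; omega
  rw [← h t (Ne.symm hst), Nat.dist_le_iff]
  exact ⟨Tuple.rel_apply_sort hR (fun j => ((Nat.dist_le_iff _ _ _).1 (hline j)).1) _,
    Tuple.rel_apply_sort hR (fun j => ((Nat.dist_le_iff _ _ _).1 (hline j)).2) _⟩

theorem spread_foldr_sortLines_le (l : List (Fin d)) (A : Arrangement n) :
    spread (l.foldr sortLines A) ≤ spread A := by
  induction l with
  | nil => rfl
  | cons t l ih => exact (spread_sortLines_le t _).trans ih

theorem monotoneAlong_foldr_sortLines {l : List (Fin d)} {t : Fin d} (ht : t ∈ l)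
    (A : Arrangement n) : MonotoneAlong t (l.foldr sortLines A) := by
  induction l with
  | nil => cases ht
  | cons s l ih =>
    rcases List.mem_cons.1 ht with rfl | ht
    · exact monotoneAlong_sortLines_self t _
    · exact (ih ht).sortLines s

theorem exists_monotonic_spread_le (A : Arrangement n) :
    ∃ A' : Arrangement n, monotonic A' ∧ spread A' ≤ spread A :=
  ⟨(List.finRange d).foldr sortLines A,
    (monotonic_iff_forall_monotoneAlong _).2
      fun t => monotoneAlong_foldr_sortLines (List.mem_finRange t) A,
    spread_foldr_sortLines_le _ A⟩

instance : Nonempty (Arrangement n) := ⟨(Fintype.equivFin _).trans (finCongr (by simp))⟩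

end Arrangement

theorem monotonic_spread_le_general (d : ℕ) (n : Fin d → ℕ) :
    (∀ A : ((i : Fin d) → Fin (n i)) ≃ Fin (∏ i, n i),
      ∃ A' : ((i : Fin d) → Fin (n i)) ≃ Fin (∏ i, n i),
        monotonic A' ∧ spread A' ≤ spread A) ∧
    (∃ A₀ : ((i : Fin d) → Fin (n i)) ≃ Fin (∏ i, n i),
      monotonic A₀ ∧
        ∀ B : ((i : Fin d) → Fin (n i)) ≃ Fin (∏ i, n i), spread A₀ ≤ spread B) := by
  refine ⟨exists_monotonic_spread_le, ?_⟩
  obtain ⟨B, hB⟩ := Finite.exists_min (spread (n := n))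
  obtain ⟨A₀, hmono, hle⟩ := exists_monotonic_spread_le B
  exact ⟨A₀, hmono, fun B' => hle.trans (hB B')⟩

/-- For every arrangement there is a monotonic arrangement of no larger spread;
in particular the minimum spread is attained by a monotonic arrangement. -/
theorem monotonic_spread_le (d : ℕ) (hd : 1 ≤ d) (n : Fin d → ℕ) (hn : ∀ i, 0 < n i) :
    (∀ A : ((i : Fin d) → Fin (n i)) ≃ Fin (∏ i, n i),
      ∃ A' : ((i : Fin d) → Fin (n i)) ≃ Fin (∏ i, n i),
        monotonic A' ∧ spread A' ≤ spread A) ∧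
    (∃ A₀ : ((i : Fin d) → Fin (n i)) ≃ Fin (∏ i, n i),
      monotonic A₀ ∧
        ∀ B : ((i : Fin d) → Fin (n i)) ≃ Fin (∏ i, n i), spread A₀ ≤ spread B) :=
  monotonic_spread_le_general d n
end

section
/- For all integers n_1, n_2 ≥ 1 and every arrangement A of an n_1 × n_2 matrix, spread(A) ≥ max{ max_{1≤i_1≤n_1} min_{1≤i_2≤n_2} ( i_1(n_2−i_2+1) + (n_1−i_1+1)i_2 − 2 − max(i_1−1, n_1−i_1) ), max_{1≤i_2≤n_2} min_{1≤i_1≤n_1} ( i_1(n_2−i_2+1) + (n_1−i_1+1)i_2 − 2 − max(i_2−1, n_2−i_2) ) }. -/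
/-- The spread of an arrangement of an `n₁ × n₂` matrix (a bijection from cells
to `{0,…,n₁n₂ − 1}`, a zero-based version of `{1,…,n₁n₂}`): the maximum
difference of values over all pairs of cells in a common row or column. -/
def spread2 {n₁ n₂ : ℕ} (A : Fin n₁ × Fin n₂ ≃ Fin (n₁ * n₂)) : ℕ :=
  Finset.sup Finset.univ
    (fun p : (Fin n₁ × Fin n₂) × (Fin n₁ × Fin n₂) =>
      if p.1.1 = p.2.1 ∨ p.1.2 = p.2.2 then Nat.dist (A p.1) (A p.2) else 0)

open Finset

lemma fin_card_filter_lt (N a : ℕ) :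
    (univ.filter fun u : Fin N => (u : ℕ) < a).card = min a N := by
  have himg : (univ.filter fun u : Fin N => (u : ℕ) < a).image Fin.val
      = Finset.range (min a N) := by
    ext m
    simp only [mem_image, mem_filter, mem_univ, true_and, mem_range, lt_min_iff]
    constructor
    · rintro ⟨u, hu, rfl⟩; exact ⟨hu, u.isLt⟩
    · rintro ⟨h1, h2⟩; exact ⟨⟨m, h2⟩, h1, rfl⟩
  rw [← Finset.card_range (min a N), ← himg,
    Finset.card_image_of_injective _ Fin.val_injective]

lemma fin_card_filter_ge (N a : ℕ) :
    (univ.filter fun u : Fin N => a ≤ (u : ℕ)).card = N - a := by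
  have himg : (univ.filter fun u : Fin N => a ≤ (u : ℕ)).image Fin.val
      = Finset.Ico a N := by
    ext m
    simp only [mem_image, mem_filter, mem_univ, true_and, mem_Ico]
    constructor
    · rintro ⟨u, hu, rfl⟩; exact ⟨hu, u.isLt⟩
    · rintro ⟨h1, h2⟩; exact ⟨⟨m, h2⟩, h1, rfl⟩
  rw [← Nat.card_Ico a N, ← himg,
    Finset.card_image_of_injective _ Fin.val_injective]

lemma exists_rank (S : Finset ℕ) (k : ℕ) (hk : k < S.card) :
    ∃ v ∈ S, (S.filter (· ≤ v)).card = k + 1 := by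
  let e := S.orderIsoOfFin rfl
  refine ⟨e ⟨k, hk⟩, (e ⟨k, hk⟩).2, ?_⟩
  have himg : S.filter (· ≤ ((e ⟨k, hk⟩ : ℕ))) =
      (univ.filter fun j : Fin S.card => (j : ℕ) < k + 1).image (fun j => (e j : ℕ)) := by
    ext u
    simp only [mem_filter, mem_image, mem_univ, true_and]
    constructor
    · rintro ⟨hu, hle⟩
      refine ⟨e.symm ⟨u, hu⟩, ?_, by simp⟩
      have h1 : e (e.symm ⟨u, hu⟩) ≤ e ⟨k, hk⟩ := by
        simp only [OrderIso.apply_symm_apply]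
        exact Subtype.mk_le_mk.mpr hle
      have h2 := e.le_iff_le.mp h1
      rw [Fin.le_def] at h2
      exact Nat.lt_succ_of_le h2
    · rintro ⟨j, hj, rfl⟩
      refine ⟨(e j).2, ?_⟩
      have : e j ≤ e ⟨k, hk⟩ := e.le_iff_le.mpr (Fin.le_def.mpr (by simpa using Nat.lt_succ_iff.mp hj))
      exact this
  rw [himg, Finset.card_image_of_injective _
      (fun a b h => e.injective (Subtype.val_injective h)),
    fin_card_filter_lt]
  omega

lemma key (m k : ℕ) (hk : 1 ≤ k) (A : Fin m × Fin k ≃ Fin (m * k)) (s : ℕ)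
    (hs : ∀ p q : Fin m × Fin k, p.1 = q.1 ∨ p.2 = q.2 → Nat.dist (A p) (A q) ≤ s)
    (i₁ : ℕ) (hi1 : 1 ≤ i₁) (hi2 : i₁ ≤ m) :
    ∃ i₂, 1 ≤ i₂ ∧ i₂ ≤ k ∧
      (i₁ : ℤ) * ((k : ℤ) - i₂) + ((m : ℤ) - i₁ + 1) * i₂ - 1 ≤ (s : ℤ) := by
  have hkne : (univ : Finset (Fin k)).Nonempty := ⟨⟨0, hk⟩, mem_univ _⟩
  set g : Fin m → ℕ := fun x => ((univ.image fun y => (A (x, y) : ℕ)).min'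
    (hkne.image _)) with hg
  have hgmem : ∀ x : Fin m, ∃ y, (A (x, y) : ℕ) = g x := by
    intro x
    have h := Finset.min'_mem (univ.image fun y => (A (x, y) : ℕ)) (hkne.image _)
    obtain ⟨y, _, hy⟩ := Finset.mem_image.mp h
    exact ⟨y, hy⟩
  have hglow : ∀ (x : Fin m) (y : Fin k), g x ≤ (A (x, y) : ℕ) := by
    intro x y
    exact Finset.min'_le _ _ (mem_image.mpr ⟨y, mem_univ _, rfl⟩)
  have hginj : Function.Injective g := by
    intro x x' hxx
    obtain ⟨y, hy⟩ := hgmem x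
    obtain ⟨y', hy'⟩ := hgmem x'
    have : A (x, y) = A (x', y') := Fin.val_injective (by rw [hy, hy', hxx])
    have := A.injective this
    exact (Prod.mk.injEq _ _ _ _ ▸ this).1
  set S : Finset ℕ := univ.image g with hSdef
  have hScard : S.card = m := by
    rw [hSdef, Finset.card_image_of_injective _ hginj, card_univ, Fintype.card_fin]
  obtain ⟨v, hvS, hvcard⟩ := exists_rank S (i₁ - 1) (by omega)
  obtain ⟨ρ, _, hρ⟩ := mem_image.mp hvS
  obtain ⟨y₀, hy₀⟩ := hgmem ρ
  rw [hρ] at hy₀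
  have hvlt : v < m * k := hy₀ ▸ (A (ρ, y₀)).isLt
  set Rset : Finset (Fin m) := univ.filter (fun x => g x ≤ v) with hRdef
  have hRcard : Rset.card = i₁ := by
    have himg : Rset.image g = S.filter (· ≤ v) := by
      ext u
      simp only [hRdef, hSdef, mem_image, mem_filter, mem_univ, true_and]
      constructor
      · rintro ⟨x, hx, rfl⟩; exact ⟨⟨x, rfl⟩, hx⟩
      · rintro ⟨⟨x, rfl⟩, h⟩; exact ⟨x, h, rfl⟩
    have := Finset.card_image_of_injective Rset hginj
    rw [himg, hvcard] at this
    omega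
  set Cset : Finset (Fin k) := univ.filter (fun y => ∃ x, (A (x, y) : ℕ) ≤ v) with hCdef
  set c : ℕ := Cset.card with hcdef
  have hc1 : 1 ≤ c := by
    have : y₀ ∈ Cset := by
      simp only [hCdef, mem_filter, mem_univ, true_and]
      exact ⟨ρ, le_of_eq hy₀⟩
    exact Finset.card_pos.mpr ⟨y₀, this⟩ 
  have hck : c ≤ k := by
    simpa using Finset.card_filter_le (univ : Finset (Fin k)) _
  -- Low cells
  set Low : Finset (Fin m × Fin k) := univ.filter (fun p => (A p : ℕ) ≤ v) with hLdef
  have hAinj : Function.Injective (fun p : Fin m × Fin k => ((A p : ℕ))) :=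
    fun p q h => A.injective (Fin.val_injective h)
  have hLowcard : Low.card = v + 1 := by
    have himg : Low.image (fun p => ((A p : ℕ))) =
        (univ.filter fun u : Fin (m * k) => (u : ℕ) < v + 1).image Fin.val := by
      ext u
      simp only [hLdef, mem_image, mem_filter, mem_univ, true_and, Nat.lt_succ_iff]
      constructor
      · rintro ⟨p, hp, rfl⟩; exact ⟨A p, hp, rfl⟩
      · rintro ⟨w, hw, rfl⟩; exact ⟨A.symm w, by simp [hw], by simp⟩
    have h1 := Finset.card_image_of_injective Low hAinj
    rw [himg, Finset.card_image_of_injective _ Fin.val_injective,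
      fin_card_filter_lt] at h1
    omega
  have hLowsub : Low ⊆ insert (ρ, y₀) ((Rset.erase ρ) ×ˢ Cset) := by
    intro p hp
    simp only [hLdef, mem_filter, mem_univ, true_and] at hp
    by_cases hpρ : p.1 = ρ
    · have hpe : p = (ρ, p.2) := Prod.ext hpρ rfl
      have hgp : g ρ ≤ (A p : ℕ) := by
        have h2 := hglow p.1 p.2
        rw [hpρ] at h2
        rw [hpe]
        exact h2
      have hveq : (A p : ℕ) = v := le_antisymm hp (hρ ▸ hgp)
      have : p = (ρ, y₀) := A.injective (Fin.val_injective (by rw [hveq, hy₀]))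
      rw [this]; exact mem_insert_self _ _
    · apply mem_insert_of_mem
      rw [Finset.mem_product]
      refine ⟨Finset.mem_erase.mpr ⟨hpρ, ?_⟩, ?_⟩
      · simp only [hRdef, mem_filter, mem_univ, true_and]
        exact le_trans (hglow p.1 p.2) hp
      · simp only [hCdef, mem_filter, mem_univ, true_and]
        exact ⟨p.1, hp⟩
  have hρR : ρ ∈ Rset := by
    simp only [hRdef, mem_filter, mem_univ, true_and]; omega
  have hLowbound : v + 1 ≤ (i₁ - 1) * c + 1 := by
    calc v + 1 = Low.card := hLowcard.symm
      _ ≤ (insert (ρ, y₀) ((Rset.erase ρ) ×ˢ Cset)).card := Finset.card_le_card hLowsub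
      _ ≤ ((Rset.erase ρ) ×ˢ Cset).card + 1 := Finset.card_insert_le _ _
      _ = (i₁ - 1) * c + 1 := by
          rw [Finset.card_product, Finset.card_erase_of_mem hρR, hRcard]
  -- High cells
  set High : Finset (Fin m × Fin k) := univ.filter (fun p => v + 1 + s ≤ (A p : ℕ))
    with hHdef
  have hHigh1 : m * k ≤ (v + 1 + s) + High.card := by
    have himg : High.image (fun p => ((A p : ℕ))) =
        (univ.filter fun u : Fin (m * k) => v + 1 + s ≤ (u : ℕ)).image Fin.val := by
      ext u
      simp only [hHdef, mem_image, mem_filter, mem_univ, true_and]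
      constructor
      · rintro ⟨p, hp, rfl⟩; exact ⟨A p, hp, rfl⟩
      · rintro ⟨w, hw, rfl⟩; exact ⟨A.symm w, by simp [hw], by simp⟩
    have h1 := Finset.card_image_of_injective High hAinj
    rw [himg, Finset.card_image_of_injective _ Fin.val_injective,
      fin_card_filter_ge] at h1
    omega
  have hHighsub : High ⊆ (Rsetᶜ) ×ˢ (Csetᶜ) := by
    intro p hp
    simp only [hHdef, mem_filter, mem_univ, true_and] at hp
    rw [Finset.mem_product, Finset.mem_compl, Finset.mem_compl]
    constructor
    · intro hmem
      simp only [hRdef, mem_filter, mem_univ, true_and] at hmem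
      obtain ⟨y', hy'⟩ := hgmem p.1
      have hd := hs p (p.1, y') (Or.inl rfl)
      simp only [Nat.dist] at hd
      omega
    · intro hmem
      simp only [hCdef, mem_filter, mem_univ, true_and] at hmem
      obtain ⟨x, hx⟩ := hmem
      have hd := hs p (x, p.2) (Or.inr rfl)
      simp only [Nat.dist] at hd
      omega
  have hHigh2 : High.card ≤ (m - i₁) * (k - c) := by
    have := Finset.card_le_card hHighsub
    rwa [Finset.card_product, Finset.card_compl, Finset.card_compl, hRcard,
      Fintype.card_fin, Fintype.card_fin, ← hcdef] at this
  refine ⟨c, hc1, hck, ?_⟩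
  have hA : m * k ≤ (v + 1 + s) + (m - i₁) * (k - c) := by omega
  have hB : v + 1 ≤ (i₁ - 1) * c + 1 := hLowbound
  zify [hi1, hi2, hck] at hA hB
  nlinarith [hA, hB]

/-- Lower bound on the spread of any arrangement of an `n₁ × n₂` matrix, as a
max over rows (resp. columns) of a min over cells in the row (resp. column) of
the volume of the two separating quadrants. -/
theorem spread2_ge_maxmin (n₁ n₂ : ℕ) (h₁ : 1 ≤ n₁) (h₂ : 1 ≤ n₂)
    (A : Fin n₁ × Fin n₂ ≃ Fin (n₁ * n₂)) :
    max
      ((Finset.Icc 1 n₁).sup' (Finset.nonempty_Icc.mpr h₁) fun i₁ =>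
        (Finset.Icc 1 n₂).inf' (Finset.nonempty_Icc.mpr h₂) fun i₂ =>
          (i₁ : ℤ) * ((n₂ : ℤ) - i₂ + 1) + ((n₁ : ℤ) - i₁ + 1) * i₂ - 2 -
            max ((i₁ : ℤ) - 1) ((n₁ : ℤ) - i₁))
      ((Finset.Icc 1 n₂).sup' (Finset.nonempty_Icc.mpr h₂) fun i₂ =>
        (Finset.Icc 1 n₁).inf' (Finset.nonempty_Icc.mpr h₁) fun i₁ =>
          (i₁ : ℤ) * ((n₂ : ℤ) - i₂ + 1) + ((n₁ : ℤ) - i₁ + 1) * i₂ - 2 -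
            max ((i₂ : ℤ) - 1) ((n₂ : ℤ) - i₂))
      ≤ (spread2 A : ℤ) := by
  set s := spread2 A with hsdef
  have hs : ∀ p q : Fin n₁ × Fin n₂, p.1 = q.1 ∨ p.2 = q.2 →
      Nat.dist (A p) (A q) ≤ s := by
    intro p q h
    have hle := Finset.le_sup (f := fun p : (Fin n₁ × Fin n₂) × (Fin n₁ × Fin n₂) =>
      if p.1.1 = p.2.1 ∨ p.1.2 = p.2.2 then Nat.dist (A p.1) (A p.2) else 0)
      (Finset.mem_univ (p, q))
    simp only at hle
    rw [if_pos h] at hle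
    rw [hsdef]
    exact hle
  rw [max_le_iff]
  constructor
  · apply Finset.sup'_le
    intro i₁ hi₁
    rw [Finset.mem_Icc] at hi₁
    obtain ⟨i₂, hi21, hi22, hb⟩ := key n₁ n₂ h₂ A s hs i₁ hi₁.1 hi₁.2
    refine le_trans (Finset.inf'_le _ (Finset.mem_Icc.mpr ⟨hi21, hi22⟩)) ?_
    have hmax : (i₁ : ℤ) - 1 ≤ max ((i₁ : ℤ) - 1) ((n₁ : ℤ) - i₁) := le_max_left _ _
    linarith [hb, hmax]
  · apply Finset.sup'_le
    intro i₂ hi₂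
    rw [Finset.mem_Icc] at hi₂
    set A' : Fin n₂ × Fin n₁ ≃ Fin (n₂ * n₁) :=
      (Equiv.prodComm (Fin n₂) (Fin n₁)).trans (A.trans (finCongr (mul_comm n₁ n₂)))
      with hA'def
    have hval : ∀ p : Fin n₂ × Fin n₁, (A' p : ℕ) = (A (p.2, p.1) : ℕ) := by
      intro p
      simp [hA'def, Prod.swap]
    have hs' : ∀ p q : Fin n₂ × Fin n₁, p.1 = q.1 ∨ p.2 = q.2 →
        Nat.dist (A' p) (A' q) ≤ s := by
      intro p q h
      rw [hval p, hval q]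
      exact hs (p.2, p.1) (q.2, q.1) (by tauto)
    obtain ⟨i₁, hi11, hi12, hb⟩ := key n₂ n₁ h₁ A' s hs' i₂ hi₂.1 hi₂.2
    refine le_trans (Finset.inf'_le _ (Finset.mem_Icc.mpr ⟨hi11, hi12⟩)) ?_
    have hmax : (i₂ : ℤ) - 1 ≤ max ((i₂ : ℤ) - 1) ((n₂ : ℤ) - i₂) := le_max_left _ _
    linarith [hb, hmax]
end

section
/- For all integers n_1, n_2 ≥ 1, every arrangement A of an n_1 × n_2 matrix has spread(A) ≥ max{ ⌈n_1/2⌉ · n_2, n_1 · ⌈n_2/2⌉ } − 1. -/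
/-!
Let `s` be the spread and, for a threshold `k`, let the cells with value `< k` meet `r` rows and
`c` columns. Each cell of these rows and columns shares a line with a value `< k`, so its own value
is `< k + s`; hence `r n₂ + (n₁ - r) c ≤ k + s`. Take `k` minimal with `r ≥ ⌈n₁/2⌉`: the `k - 1`
smallest values then lie in fewer than `⌈n₁/2⌉` rows and within the `c` columns, so
`k - 1 ≤ ⌊n₁/2⌋ c`. Together these give `⌈n₁/2⌉ n₂ - 1 ≤ s`, and transposing gives the other bound.
-/

open Finset

section Cross

variable {α β : Type*} [Fintype α] [Fintype β] [DecidableEq α] [DecidableEq β]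

def crossSet (R : Finset α) (C : Finset β) : Finset (α × β) := R ×ˢ univ ∪ univ ×ˢ C

theorem card_crossSet (R : Finset α) (C : Finset β) :
    #(crossSet R C) = #R * Fintype.card β + (Fintype.card α - #R) * #C := by
  have hsplit : crossSet R C = R ×ˢ univ ∪ Rᶜ ×ˢ C := by
    ext z; by_cases hz : z.1 ∈ R <;> simp [crossSet, hz]
  have hdisj : Disjoint (R ×ˢ (univ : Finset β)) (Rᶜ ×ˢ C) :=
    disjoint_product.mpr (Or.inl disjoint_compl_right)
  rw [hsplit, card_union_of_disjoint hdisj, card_product, card_product, card_compl, card_univ]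

end Cross

section Arrangement

variable {n₁ n₂ : ℕ} (A : Fin n₁ × Fin n₂ ≃ Fin (n₁ * n₂))

theorem dist_le_spread2 {x y : Fin n₁ × Fin n₂} (h : x.1 = y.1 ∨ x.2 = y.2) :
    Nat.dist (A x) (A y) ≤ spread2 A := by
  unfold spread2
  exact le_sup_of_le (mem_univ (x, y)) (by rw [if_pos h])

def transposeArrangement : Fin n₂ × Fin n₁ ≃ Fin (n₂ * n₁) :=
  (Equiv.prodComm _ _).trans (A.trans (finCongr (mul_comm n₁ n₂)))

theorem spread2_transposeArrangement_le : spread2 (transposeArrangement A) ≤ spread2 A := by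
  refine Finset.sup_le fun p _ => ?_
  split_ifs with h
  · exact dist_le_spread2 A (x := p.1.swap) (y := p.2.swap) h.symm
  · exact Nat.zero_le _

def lowCells (k : ℕ) : Finset (Fin n₁ × Fin n₂) := {z | (A z : ℕ) < k}

def lowRows (k : ℕ) : Finset (Fin n₁) := (lowCells A k).image Prod.fst

def lowCols (k : ℕ) : Finset (Fin n₂) := (lowCells A k).image Prod.snd

theorem lowCells_mono : Monotone (lowCells A) := fun _ _ hkl _ => by
  simp only [lowCells, mem_filter, mem_univ, true_and]; omega

theorem card_lowCells (k : ℕ) : #(lowCells A k) = min (n₁ * n₂) k :=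
  (card_equiv A fun _ => by simp [lowCells]).trans Fin.card_filter_val_lt

theorem card_lowCells_le_mul (k : ℕ) : #(lowCells A k) ≤ #(lowRows A k) * #(lowCols A k) := by
  rw [← card_product]
  exact card_le_card fun z hz => mem_product.mpr ⟨mem_image_of_mem _ hz, mem_image_of_mem _ hz⟩

theorem lowRows_eq_univ (hn₂ : 0 < n₂) : lowRows A (n₁ * n₂) = univ := by
  refine eq_univ_of_forall fun i => mem_image.mpr ⟨(i, ⟨0, hn₂⟩), ?_, rfl⟩
  simp [lowCells]

theorem crossSet_subset_lowCells (k : ℕ) :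
    crossSet (lowRows A k) (lowCols A k) ⊆ lowCells A (k + spread2 A) := by
  intro z hz
  obtain ⟨w, hw, hwz⟩ : ∃ w ∈ lowCells A k, w.1 = z.1 ∨ w.2 = z.2 := by
    simp only [crossSet, mem_union, mem_product, mem_univ, and_true, true_and, lowRows,
      lowCols, mem_image] at hz
    rcases hz with ⟨w, hw, h⟩ | ⟨w, hw, h⟩
    exacts [⟨w, hw, .inl h⟩, ⟨w, hw, .inr h⟩]
  have hdist := dist_le_spread2 A hwz
  simp only [lowCells, mem_filter, mem_univ, true_and] at hw ⊢
  unfold Nat.dist at hdist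
  omega

theorem exists_threshold (hn₂ : 0 < n₂) {a : ℕ} (ha : a ≤ n₁) :
    ∃ k, a ≤ #(lowRows A k) ∧ k ≤ (a - 1) * #(lowCols A k) + 1 := by
  have hex : ∃ k, a ≤ #(lowRows A k) := ⟨n₁ * n₂, by simpa [lowRows_eq_univ A hn₂]⟩
  have hspec := Nat.find_spec hex
  have hmin : ∀ j < Nat.find hex, ¬a ≤ #(lowRows A j) := fun _ => Nat.find_min hex
  have hkN : Nat.find hex ≤ n₁ * n₂ := Nat.find_min' hex (by simpa [lowRows_eq_univ A hn₂])
  generalize Nat.find hex = k at hmin hkN hspec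
  refine ⟨k, hspec, ?_⟩
  obtain hk | hk := Nat.eq_zero_or_pos k
  · omega
  have hrows : #(lowRows A (k - 1)) ≤ a - 1 := by
    have := hmin (k - 1) (by omega); omega
  have hcols : #(lowCols A (k - 1)) ≤ #(lowCols A k) :=
    card_le_card (image_subset_image (lowCells_mono A (Nat.sub_le k 1)))
  have := card_lowCells_le_mul A (k - 1)
  rw [card_lowCells, min_eq_right (by omega)] at this
  have := Nat.mul_le_mul hrows hcols
  omega

theorem half_mul_sub_one_le_spread2 : (n₁ + 1) / 2 * n₂ - 1 ≤ spread2 A := by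
  obtain rfl | hn₂ := Nat.eq_zero_or_pos n₂
  · simp
  obtain ⟨k, hrows, hk⟩ := exists_threshold A hn₂ (a := (n₁ + 1) / 2) (by omega)
  have hcross := card_le_card (crossSet_subset_lowCells A k)
  rw [card_crossSet, card_lowCells, Fintype.card_fin, Fintype.card_fin] at hcross
  set r := #(lowRows A k)
  set c := #(lowCols A k)
  have hr : r ≤ n₁ := by simpa using card_le_univ (lowRows A k)
  have hc : c ≤ n₂ := by simpa using card_le_univ (lowCols A k)
  have hmono : (n₁ + 1) / 2 * n₂ + (n₁ - (n₁ + 1) / 2) * c ≤ r * n₂ + (n₁ - r) * c := by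
    obtain ⟨d, hd⟩ := Nat.exists_eq_add_of_le hrows
    rw [hd, show n₁ - (n₁ + 1) / 2 = (n₁ - r) + d by omega, ← hd]
    nlinarith
  have hhalf : ((n₁ + 1) / 2 - 1) * c ≤ (n₁ - (n₁ + 1) / 2) * c := Nat.mul_le_mul_right _ (by omega)
  omega

end Arrangement

theorem spread2_lower_bound_general (n₁ n₂ : ℕ)
    (A : Fin n₁ × Fin n₂ ≃ Fin (n₁ * n₂)) :
    max ((n₁ + 1) / 2 * n₂) (n₁ * ((n₂ + 1) / 2)) - 1 ≤ spread2 A := by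
  have hrows := half_mul_sub_one_le_spread2 A
  have hcols := (half_mul_sub_one_le_spread2 (transposeArrangement A)).trans
    (spread2_transposeArrangement_le A)
  rw [mul_comm] at hcols
  omega

/-- Every arrangement of an `n₁ × n₂` matrix has spread at least
`max(⌈n₁/2⌉·n₂, n₁·⌈n₂/2⌉) − 1`. -/
theorem spread2_lower_bound (n₁ n₂ : ℕ) (h₁ : 1 ≤ n₁) (h₂ : 1 ≤ n₂)
    (A : Fin n₁ × Fin n₂ ≃ Fin (n₁ * n₂)) :
    max ((n₁ + 1) / 2 * n₂) (n₁ * ((n₂ + 1) / 2)) - 1 ≤ spread2 A :=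
  spread2_lower_bound_general n₁ n₂ A
end

section
/- Let n_1, n_2 be positive integers with n_1 ≤ n_2 and n_1 odd. Then every arrangement A of an n_1 × n_2 matrix has spread(A) ≥ (n_1+1)n_2/2 − 1. -/
open Finset

namespace Spread2

variable {n₁ n₂ : ℕ} (A : Fin n₁ × Fin n₂ ≃ Fin (n₁ * n₂))

def below (t : ℕ) : Finset (Fin n₁ × Fin n₂) := {p | (A p : ℕ) < t}

def rowsBelow (t : ℕ) : Finset (Fin n₁) := (below A t).image Prod.fst

def colsBelow (t : ℕ) : Finset (Fin n₂) := (below A t).image Prod.snd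

def linesBelow (t : ℕ) : Finset (Fin n₁ × Fin n₂) :=
  rowsBelow A t ×ˢ univ ∪ univ ×ˢ colsBelow A t

lemma dist_le_spread2 {p q : Fin n₁ × Fin n₂} (h : p.1 = q.1 ∨ p.2 = q.2) :
    Nat.dist (A p) (A q) ≤ spread2 A := by
  have := le_sup (f := fun r : (Fin n₁ × Fin n₂) × (Fin n₁ × Fin n₂) =>
      if r.1.1 = r.2.1 ∨ r.1.2 = r.2.2 then Nat.dist (A r.1) (A r.2) else 0)
    (mem_univ (p, q))
  simpa only [spread2, if_pos h] using this

lemma card_below (t : ℕ) : #(below A t) = min (n₁ * n₂) t := by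
  rw [← Fin.card_filter_val_lt]
  exact card_equiv A fun p => by simp [below]

lemma card_below_le_mul (t : ℕ) :
    #(below A t) ≤ #(rowsBelow A t) * #(colsBelow A t) := by
  rw [← card_product]
  exact card_le_card fun p hp => mem_product.2 ⟨mem_image_of_mem _ hp, mem_image_of_mem _ hp⟩

lemma colsBelow_mono : Monotone (colsBelow A) := fun _ _ h =>
  image_subset_image <| monotone_filter_right _ fun _ _ hp => lt_of_lt_of_le hp h

lemma rowsBelow_zero : rowsBelow A 0 = ∅ := by
  simp [rowsBelow, below]

lemma rowsBelow_eq_univ (hn₂ : 0 < n₂) : rowsBelow A (n₁ * n₂) = univ :=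
  eq_univ_of_forall fun i => mem_image.2 ⟨(i, ⟨0, hn₂⟩), by simp [below], rfl⟩

lemma exists_card_rowsBelow_crossing {k : ℕ} (hk : 0 < k) (hkn : k ≤ n₁) (hn₂ : 0 < n₂) :
    ∃ t < n₁ * n₂, #(rowsBelow A t) < k ∧ k ≤ #(rowsBelow A (t + 1)) := by
  have hN : k ≤ #(rowsBelow A (n₁ * n₂)) := by simpa [rowsBelow_eq_univ A hn₂]
  have hP : ∃ t, k ≤ #(rowsBelow A t) := ⟨_, hN⟩
  obtain ⟨t, ht⟩ : ∃ t, Nat.find hP = t + 1 :=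
    Nat.exists_eq_add_one_of_ne_zero fun h0 => by
      simpa [h0, rowsBelow_zero] using (Nat.find_spec hP).trans_lt' hk
  exact ⟨t, by have := Nat.find_min' hP hN; omega, not_le.1 (Nat.find_min hP (by omega)),
    ht ▸ Nat.find_spec hP⟩

lemma val_le_of_mem_linesBelow {t : ℕ} {p : Fin n₁ × Fin n₂} (hp : p ∈ linesBelow A (t + 1)) :
    (A p : ℕ) ≤ t + spread2 A := by
  obtain ⟨q, hq, hpq⟩ : ∃ q ∈ below A (t + 1), p.1 = q.1 ∨ p.2 = q.2 := by
    simp only [linesBelow, rowsBelow, colsBelow, mem_union, mem_product, mem_image,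
      mem_univ, and_true, true_and] at hp
    rcases hp with ⟨q, hq, h⟩ | ⟨q, hq, h⟩
    exacts [⟨q, hq, .inl h.symm⟩, ⟨q, hq, .inr h.symm⟩]
  have hq : (A q : ℕ) < t + 1 := by simpa [below] using hq
  have := dist_le_spread2 A hpq
  simp only [Nat.dist] at this
  omega

lemma card_linesBelow_le (t : ℕ) : #(linesBelow A (t + 1)) ≤ t + spread2 A + 1 := by
  simpa using card_le_card_of_injOn (t := range (t + spread2 A + 1)) (fun p => (A p : ℕ))
    (fun p hp => mem_range.2 (Nat.lt_succ_of_le (val_le_of_mem_linesBelow A hp)))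
    (fun p _ q _ h => A.injective (Fin.val_injective h))

lemma card_linesBelow_add_mul (t : ℕ) :
    #(linesBelow A t) + #(rowsBelow A t) * #(colsBelow A t)
      = #(rowsBelow A t) * n₂ + n₁ * #(colsBelow A t) := by
  have h := card_union_add_card_inter (rowsBelow A t ×ˢ (univ : Finset (Fin n₂)))
    ((univ : Finset (Fin n₁)) ×ˢ colsBelow A t)
  rw [product_inter_product, inter_univ, univ_inter] at h
  simpa [linesBelow, card_product] using h

theorem mul_le_spread2_add_one {k : ℕ} (hk : 2 * k ≤ n₁ + 1) : k * n₂ ≤ spread2 A + 1 := by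
  rcases Nat.eq_zero_or_pos k with rfl | hk₀
  · simp
  rcases Nat.eq_zero_or_pos n₂ with rfl | hn₂
  · simp
  obtain ⟨t, hN, hbefore, hafter⟩ := exists_card_rowsBelow_crossing A hk₀ (by omega) hn₂
  set r := #(rowsBelow A (t + 1))
  set c := #(colsBelow A (t + 1))
  have hc : c ≤ n₂ := by simpa using card_le_univ (colsBelow A (t + 1))
  have ht : t + c ≤ k * c := by
    calc t + c = #(below A t) + c := by rw [card_below, min_eq_right hN.le]
      _ ≤ #(rowsBelow A t) * #(colsBelow A t) + c := by gcongr; exact card_below_le_mul A t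
      _ ≤ #(rowsBelow A t) * c + c := by gcongr; exact card_le_card (colsBelow_mono A t.le_succ)
      _ ≤ k * c := by rw [← Nat.succ_mul]; exact Nat.mul_le_mul_right c hbefore
  have hlines := card_linesBelow_add_mul A (t + 1)
  have hle := card_linesBelow_le A t
  -- `k n₂ + r c ≤ r n₂ + k c` is `(r - k)(n₂ - c) ≥ 0`
  nlinarith [Nat.mul_le_mul (Nat.sub_le_sub_right hafter k) (Nat.sub_le_sub_right hc c)]

end Spread2

theorem spread2_lower_bound_odd_general (n₁ n₂ : ℕ) (hodd : Odd n₁)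
    (A : Fin n₁ × Fin n₂ ≃ Fin (n₁ * n₂)) :
    (n₁ + 1) * n₂ / 2 - 1 ≤ spread2 A := by
  obtain ⟨m, rfl⟩ := hodd
  have hdiv : (2 * m + 1 + 1) * n₂ / 2 = (m + 1) * n₂ := by
    rw [show (2 * m + 1 + 1) * n₂ = 2 * ((m + 1) * n₂) by ring, Nat.mul_div_cancel_left _ two_pos]
  have := Spread2.mul_le_spread2_add_one A (k := m + 1) (by omega)
  omega

/-- If `n₁ ≤ n₂` and `n₁` is odd, every arrangement of an `n₁ × n₂` matrix
has spread at least `(n₁+1)n₂/2 − 1`. -/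
theorem spread2_lower_bound_odd (n₁ n₂ : ℕ) (h₁ : 1 ≤ n₁) (h₂ : 1 ≤ n₂)
    (hle : n₁ ≤ n₂) (hodd : Odd n₁)
    (A : Fin n₁ × Fin n₂ ≃ Fin (n₁ * n₂)) :
    (n₁ + 1) * n₂ / 2 - 1 ≤ spread2 A :=
  spread2_lower_bound_odd_general n₁ n₂ hodd A
end

section
/- Let n_1, n_2 be positive integers with n_1 ≤ n_2 and n_1 even. Define A : {1,…,n_1} × {1,…,n_2} → {1,…,n_1 n_2} by A(i_1, i_2) = (i_2 − 1)·(n_1/2) + i_1 if i_1 ≤ n_1/2, and A(i_1, i_2) = n_1 n_2/2 + (i_2 − 1)·(n_1/2) + (i_1 − n_1/2) if i_1 > n_1/2. Then A is a bijection (hence an arrangement) and spread(A) = n_1(n_2+1)/2 − 1. -/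
/-- The explicit half-column-filling map, stated with 1-based coordinates
`i₁ = c.1 + 1 ∈ {1,…,n₁}`, `i₂ = c.2 + 1 ∈ {1,…,n₂}` and 1-based values in
`{1,…,n₁n₂}`:  `A(i₁,i₂) = (i₂−1)·(n₁/2) + i₁` if `i₁ ≤ n₁/2`, and
`A(i₁,i₂) = n₁n₂/2 + (i₂−1)·(n₁/2) + (i₁ − n₁/2)` otherwise. -/
def halfColumnFill (n₁ n₂ : ℕ) (c : Fin n₁ × Fin n₂) : ℕ :=
  if c.1.val + 1 ≤ n₁ / 2 then
    c.2.val * (n₁ / 2) + (c.1.val + 1)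
  else
    n₁ * n₂ / 2 + c.2.val * (n₁ / 2) + (c.1.val + 1 - n₁ / 2)

/-- Zero-based version of the half-column fill value. -/
def gval (m n₂ i₁ i₂ : ℕ) : ℕ :=
  if i₁ < m then i₂ * m + i₁ else m * n₂ + i₂ * m + (i₁ - m)

lemma prod_bound (m n₂ i₂ : ℕ) (h : i₂ < n₂) : i₂ * m + m ≤ m * n₂ := by
  calc i₂ * m + m = (i₂ + 1) * m := by ring
    _ ≤ n₂ * m := Nat.mul_le_mul_right m h
    _ = m * n₂ := Nat.mul_comm n₂ m

lemma gval_lt (m n₂ i₁ i₂ : ℕ) (hm : 1 ≤ m) (h1 : i₁ < m + m) (h2 : i₂ < n₂) :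
    gval m n₂ i₁ i₂ < (m + m) * n₂ := by
  have hx := prod_bound m n₂ i₂ h2
  have hz : (m + m) * n₂ = m * n₂ + m * n₂ := by ring
  unfold gval
  split_ifs <;> omega

lemma gval_le (m n₂ i₁ i₂ j₁ j₂ : ℕ) (hm : 1 ≤ m)
    (hi1 : i₁ < m + m) (hj1 : j₁ < m + m) (hi2 : i₂ < n₂) (hj2 : j₂ < n₂)
    (hc : i₁ = j₁ ∨ i₂ = j₂) :
    gval m n₂ i₁ i₂ ≤ gval m n₂ j₁ j₂ + (m * n₂ + m - 1) := by
  have hx := prod_bound m n₂ i₂ hi2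
  have hy := prod_bound m n₂ j₂ hj2
  unfold gval
  rcases hc with rfl | rfl <;> split_ifs <;> omega

lemma gval_inj (m n₂ i₁ i₂ j₁ j₂ : ℕ) (hm : 1 ≤ m)
    (hi1 : i₁ < m + m) (hj1 : j₁ < m + m) (hi2 : i₂ < n₂) (hj2 : j₂ < n₂)
    (h : gval m n₂ i₁ i₂ = gval m n₂ j₁ j₂) : i₁ = j₁ ∧ i₂ = j₂ := by
  have hdiv : ∀ b a : ℕ, a < m → (b * m + a) / m = b := by
    intro b a ha
    rw [Nat.mul_comm b m, Nat.mul_add_div (by omega), Nat.div_eq_of_lt ha, Nat.add_zero]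
  have hx := prod_bound m n₂ i₂ hi2
  have hy := prod_bound m n₂ j₂ hj2
  unfold gval at h
  rcases Nat.lt_or_ge i₁ m with h1 | h1 <;> rcases Nat.lt_or_ge j₁ m with h2 | h2
  · rw [if_pos h1, if_pos h2] at h
    have e2 : i₂ = j₂ := by rw [← hdiv i₂ i₁ h1, ← hdiv j₂ j₁ h2, h]
    subst e2
    exact ⟨Nat.add_left_cancel h, rfl⟩
  · rw [if_pos h1, if_neg (by omega)] at h
    omega
  · rw [if_neg (by omega), if_pos h2] at h
    omega
  · rw [if_neg (by omega), if_neg (by omega), add_assoc, add_assoc] at h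
    have h' := Nat.add_left_cancel h
    have e2 : i₂ = j₂ := by
      rw [← hdiv i₂ (i₁ - m) (by omega), ← hdiv j₂ (j₁ - m) (by omega), h']
    subst e2
    have := Nat.add_left_cancel h'
    exact ⟨by omega, rfl⟩

/-- If `n₁ ≤ n₂` and `n₁` is even, the explicit map `halfColumnFill` is a
bijection onto `{1,…,n₁n₂}` (hence an arrangement) and has spread exactly
`n₁(n₂+1)/2 − 1`. -/
theorem halfColumnFill_bijective_and_spread (n₁ n₂ : ℕ) (h₁ : 1 ≤ n₁) (h₂ : 1 ≤ n₂)
    (hle : n₁ ≤ n₂) (heven : Even n₁) :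
    ∃ A : Fin n₁ × Fin n₂ ≃ Fin (n₁ * n₂),
      (∀ c : Fin n₁ × Fin n₂, (A c : ℕ) + 1 = halfColumnFill n₁ n₂ c) ∧
      spread2 A = n₁ * (n₂ + 1) / 2 - 1 := by
  obtain ⟨m, hm⟩ := heven
  subst hm
  have hm1 : 1 ≤ m := by omega
  set f : Fin (m + m) × Fin n₂ → Fin ((m + m) * n₂) :=
    fun c => ⟨gval m n₂ c.1.val c.2.val, gval_lt m n₂ c.1.val c.2.val hm1 c.1.isLt c.2.isLt⟩
    with hfdef
  have hinj : Function.Injective f := by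
    intro c d h
    obtain ⟨e1, e2⟩ := gval_inj m n₂ c.1.val c.2.val d.1.val d.2.val hm1
      c.1.isLt d.1.isLt c.2.isLt d.2.isLt (congrArg Fin.val h)
    exact Prod.ext (Fin.ext e1) (Fin.ext e2)
  have hbij : Function.Bijective f :=
    (Fintype.bijective_iff_injective_and_card f).mpr ⟨hinj, by simp⟩
  refine ⟨Equiv.ofBijective f hbij, ?_, ?_⟩
  · intro c
    have e : ((Equiv.ofBijective f hbij) c : ℕ) = gval m n₂ c.1.val c.2.val := rfl
    have d1 : (m + m) / 2 = m := by omega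
    have d2 : (m + m) * n₂ / 2 = m * n₂ := by
      have h' : (m + m) * n₂ = m * n₂ * 2 := by ring
      rw [h', Nat.mul_div_cancel _ (by norm_num)]
    rw [e]
    simp only [halfColumnFill, d1, d2]
    unfold gval
    split_ifs <;> omega
  · have d3 : (m + m) * (n₂ + 1) / 2 = m * n₂ + m := by
      have h' : (m + m) * (n₂ + 1) = (m * n₂ + m) * 2 := by ring
      rw [h', Nat.mul_div_cancel _ (by norm_num)]
    rw [d3]
    set A := Equiv.ofBijective f hbij with hA
    apply le_antisymm
    · unfold spread2
      apply Finset.sup_le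
      intro p _
      by_cases hc : p.1.1 = p.2.1 ∨ p.1.2 = p.2.2
      · rw [if_pos hc]
        have hcv : p.1.1.val = p.2.1.val ∨ p.1.2.val = p.2.2.val :=
          hc.imp (congrArg Fin.val) (congrArg Fin.val)
        have L1 := gval_le m n₂ p.1.1.val p.1.2.val p.2.1.val p.2.2.val hm1
          p.1.1.isLt p.2.1.isLt p.1.2.isLt p.2.2.isLt hcv
        have L2 := gval_le m n₂ p.2.1.val p.2.2.val p.1.1.val p.1.2.val hm1
          p.2.1.isLt p.1.1.isLt p.2.2.isLt p.1.2.isLt (hcv.imp Eq.symm Eq.symm)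
        have e1 : (A p.1 : ℕ) = gval m n₂ p.1.1.val p.1.2.val := rfl
        have e2 : (A p.2 : ℕ) = gval m n₂ p.2.1.val p.2.2.val := rfl
        rw [e1, e2]
        unfold Nat.dist
        omega
      · rw [if_neg hc]
        exact Nat.zero_le _
    · unfold spread2
      refine le_trans ?_ (Finset.le_sup (Finset.mem_univ
        ((⟨0, by omega⟩, ⟨0, by omega⟩),
         (⟨m + m - 1, by omega⟩, (⟨0, by omega⟩ : Fin n₂)))))
      dsimp only
      rw [if_pos (Or.inr rfl)]
      have e1 : (A (⟨0, by omega⟩, (⟨0, by omega⟩ : Fin n₂)) : ℕ) = gval m n₂ 0 0 := rfl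
      have e2 : (A (⟨m + m - 1, by omega⟩, (⟨0, by omega⟩ : Fin n₂)) : ℕ)
          = gval m n₂ (m + m - 1) 0 := rfl
      rw [e1, e2]
      have v1 : gval m n₂ 0 0 = 0 := by unfold gval; rw [if_pos (by omega)]; omega
      have v2 : gval m n₂ (m + m - 1) 0 = m * n₂ + (m - 1) := by
        unfold gval; rw [if_neg (by omega)]; omega
      rw [v1, v2, Nat.dist_zero_left]
      omega
end

section
/- Let d ≥ 1 and let n_1 ≤ n_2 ≤ ⋯ ≤ n_d be positive integers with n_1 even (so n_1 = min_t n_t). Then there exists an arrangement A of the n_1 × n_2 × ⋯ × n_d matrix with spread(A) ≤ ( Σ_{t=0}^{d−1} C(t, ⌊t/2⌋) ) · ∏_{t=1}^{d} ⌈n_t/2⌉ + n_1/2 − 1, where C(t, ⌊t/2⌋) denotes the binomial coefficient (t choose ⌊t/2⌋). -/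
/-!
Write each coordinate of a cell as `c i = 2 * q i + ε i` with `ε i ∈ {0, 1}`. Order the cells
lexicographically by the position of the parity vector `ε` in a listing of the cube `{0,1}^d`,
then by the mixed-radix value of `q ∈ ∏ i, Fin ⌈n i / 2⌉` (with `q 0` least significant), and
number them in this order; numbering by rank can only shrink gaps.

The cube is listed by weight, each weight class colexicographically, and then raising
coordinate `t` moves a vector forward by at most `β t = ∑_{t ≤ j < d} C(j, ⌊j/2⌋)` places.
A step along a line in direction `t` changes `ε` and `q` only at `t`. For `t = 0` the `q`-part
moves by less than `⌈n 0 / 2⌉ = n 0 / 2`; for `t > 0` the cube part moves by at most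
`β 0 - 1` blocks, which absorbs any move of the `q`-part.
-/

open Finset Function

theorem Nat.dist_lt_of_lt_of_lt {a b M : ℕ} (ha : a < M) (hb : b < M) : Nat.dist a b < M := by
  unfold Nat.dist; omega

theorem Nat.dist_mul_add_le (x y r s M : ℕ) :
    Nat.dist (x * M + r) (y * M + s) ≤ Nat.dist x y * M + Nat.dist r s :=
  calc Nat.dist (x * M + r) (y * M + s)
      ≤ Nat.dist (x * M + r) (y * M + r) + Nat.dist (y * M + r) (y * M + s) :=
        Nat.dist.triangle_inequality _ _ _
    _ = Nat.dist x y * M + Nat.dist r s := by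
        rw [Nat.dist_add_add_right, Nat.dist_add_add_left, Nat.dist_mul_right]

theorem Fin.dist_le_dist_of_strictMono {N : ℕ} {g : Fin N → ℕ} (hg : StrictMono g)
    (i j : Fin N) : Nat.dist i j ≤ Nat.dist (g i) (g j) := by
  wlog hij : i ≤ j generalizing i j
  · rw [Nat.dist_comm, Nat.dist_comm (g i)]
    exact this j i (le_of_not_ge hij)
  have hcard := card_le_card_of_injOn g (s := Icc i j) (t := Icc (g i) (g j))
    (fun k hk => by
      simp only [coe_Icc, Set.mem_Icc] at hk ⊢
      exact ⟨hg.monotone hk.1, hg.monotone hk.2⟩)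
    hg.injective.injOn
  rw [Fin.card_Icc, Nat.card_Icc] at hcard
  rw [Nat.dist_eq_sub_of_le (Fin.le_def.1 hij), Nat.dist_eq_sub_of_le (hg.monotone hij)]
  omega

theorem exists_equiv_fin_dist_le_of_injective {α : Type*} [Fintype α] {N : ℕ}
    (hN : Fintype.card α = N) {key : α → ℕ} (hkey : Injective key) :
    ∃ A : α ≃ Fin N, ∀ a b, Nat.dist (A a) (A b) ≤ Nat.dist (key a) (key b) := by
  let _ : LinearOrder α := LinearOrder.lift' key hkey
  let A : α ≃o Fin N := (monoEquivOfFin α hN).symm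
  refine ⟨A.toEquiv, fun a b => ?_⟩
  have hmono : StrictMono (key ∘ A.symm) := fun i j h => A.symm.strictMono h
  simpa using Fin.dist_le_dist_of_strictMono hmono (A a) (A b)

theorem finPiFinEquiv_dist_of_forall_succ_eq {m : ℕ} {n : Fin (m + 1) → ℕ}
    {f g : ∀ i, Fin (n i)} (h : ∀ i : Fin m, f i.succ = g i.succ) :
    Nat.dist (finPiFinEquiv f) (finPiFinEquiv g) = Nat.dist (f 0) (g 0) := by
  simp only [finPiFinEquiv_apply, Fin.sum_univ_succ, h, Nat.dist_add_add_right,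
    Nat.dist_mul_right]
  exact mul_one _

theorem spread_le_of_forall_sameLine {d : ℕ} {n : Fin d → ℕ}
    {A : ((i : Fin d) → Fin (n i)) ≃ Fin (∏ i, n i)} {B : ℕ}
    (h : ∀ c c', sameLine c c' → Nat.dist (A c) (A c') ≤ B) : spread A ≤ B :=
  Finset.sup_le fun p _ => by
    split_ifs with hp
    exacts [h _ _ hp, B.zero_le]


namespace BoolCube

variable {d : ℕ}

def weight (v : Fin d → Bool) : ℕ := ∑ i, (v i).toNat

theorem weight_update_true {v : Fin d → Bool} {t : Fin d} (h : v t = false) :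
    weight (update v t true) = weight v + 1 := by
  have hv := Finset.add_sum_erase univ (fun i => (v i).toNat) (mem_univ t)
  simp only [weight, apply_update (fun _ => Bool.toNat), Finset.sum_update_of_mem (mem_univ t),
    ← hv, h, Bool.toNat_true, Bool.toNat_false, sdiff_singleton_eq_erase]
  omega

theorem weight_succ (v : Fin (d + 1) → Bool) :
    weight v = weight (Fin.init v) + (v (Fin.last d)).toNat :=
  Fin.sum_univ_castSucc _

theorem weight_of_last_true {v : Fin (d + 1) → Bool} (h : v (Fin.last d) = true) :
    weight v = weight (Fin.init v) + 1 := by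
  simp [weight_succ v, h]

theorem weight_of_last_false {v : Fin (d + 1) → Bool} (h : v (Fin.last d) = false) :
    weight v = weight (Fin.init v) := by
  simp [weight_succ v, h]

/-- Rank of `v` among the vectors of the same weight, in the colexicographic order in which
a `true` last coordinate comes first: `(d + 1).choose w - d.choose w` vectors of weight `w`
have a `true` last coordinate. -/
def levelRank : (d : ℕ) → (Fin d → Bool) → ℕ
  | 0, _ => 0
  | d + 1, v => (if v (Fin.last d) then 0 else (d + 1).choose (weight v) - d.choose (weight v))
      + levelRank d (Fin.init v)

theorem levelRank_of_last_true {v : Fin (d + 1) → Bool} (h : v (Fin.last d) = true) :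
    levelRank (d + 1) v = levelRank d (Fin.init v) := by
  simp [levelRank, h]

theorem levelRank_of_last_false {v : Fin (d + 1) → Bool} (h : v (Fin.last d) = false) :
    levelRank (d + 1) v = (d + 1).choose (weight (Fin.init v)) - d.choose (weight (Fin.init v))
      + levelRank d (Fin.init v) := by
  simp [levelRank, h, weight_of_last_false h]

theorem levelRank_lt_choose : ∀ {d : ℕ} (v : Fin d → Bool), levelRank d v < d.choose (weight v)
  | 0, v => by simp [levelRank, weight]
  | d + 1, v => by
    have ih := levelRank_lt_choose (Fin.init v)
    have hmono := Nat.choose_le_choose (weight (Fin.init v)) (Nat.le_add_right d 1)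
    cases h : v (Fin.last d)
    · rw [levelRank_of_last_false h, weight_of_last_false h]
      omega
    · rw [levelRank_of_last_true h, weight_of_last_true h, Nat.choose_succ_succ']
      omega

theorem levelRank_lt_of_last {v w : Fin (d + 1) → Bool} (hv : v (Fin.last d) = true)
    (hw : w (Fin.last d) = false) (hweight : weight v = weight w) :
    levelRank (d + 1) v < levelRank (d + 1) w := by
  have := levelRank_lt_choose (Fin.init v)
  rw [levelRank_of_last_true hv, levelRank_of_last_false hw]
  rw [weight_of_last_true hv, weight_of_last_false hw] at hweight
  rw [← hweight, Nat.choose_succ_succ']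
  omega

theorem eq_of_weight_eq_of_levelRank_eq :
    ∀ {d : ℕ} {v w : Fin d → Bool}, weight v = weight w → levelRank d v = levelRank d w → v = w
  | 0, _, _, _, _ => Subsingleton.elim _ _
  | d + 1, v, w, hweight, hrank => by
    suffices Fin.init v = Fin.init w ∧ v (Fin.last d) = w (Fin.last d) by
      rw [← Fin.snoc_init_self v, ← Fin.snoc_init_self w, this.1, this.2]
    cases hv : v (Fin.last d) <;> cases hw : w (Fin.last d)
    · rw [levelRank_of_last_false hv, levelRank_of_last_false hw] at hrank
      rw [weight_of_last_false hv, weight_of_last_false hw] at hweight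
      rw [hweight] at hrank
      exact ⟨eq_of_weight_eq_of_levelRank_eq hweight (by omega), rfl⟩
    · exact absurd hrank (levelRank_lt_of_last hw hv hweight.symm).ne'
    · exact absurd hrank (levelRank_lt_of_last hv hw hweight).ne
    · rw [levelRank_of_last_true hv, levelRank_of_last_true hw] at hrank
      rw [weight_of_last_true hv, weight_of_last_true hw] at hweight
      exact ⟨eq_of_weight_eq_of_levelRank_eq (by omega) hrank, rfl⟩

def index (d : ℕ) (v : Fin d → Bool) : ℕ :=
  ∑ j ∈ range (weight v), d.choose j + levelRank d v

theorem index_lt_index_of_weight_lt {v w : Fin d → Bool} (h : weight v < weight w) :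
    index d v < index d w := by
  have hsub := sum_le_sum_of_subset (f := d.choose) (range_subset_range.2 h)
  have := levelRank_lt_choose v
  rw [sum_range_succ] at hsub
  unfold index
  omega

theorem index_injective : Injective (index d) := by
  intro v w h
  have hweight : weight v = weight w := by
    by_contra hne
    rcases Nat.lt_or_gt_of_ne hne with hlt | hlt
    · exact (index_lt_index_of_weight_lt hlt).ne h
    · exact (index_lt_index_of_weight_lt hlt).ne' h
  refine eq_of_weight_eq_of_levelRank_eq hweight ?_
  unfold index at h
  rw [hweight] at h
  omega

def flipBound (d t : ℕ) : ℕ := ∑ j ∈ Ico t d, j.choose (j / 2)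

theorem flipBound_succ {t : ℕ} (h : t ≤ d) :
    flipBound (d + 1) t = flipBound d t + d.choose (d / 2) :=
  sum_Ico_succ_top h _

theorem flipBound_lt_flipBound_zero {t : ℕ} (ht : 0 < t) (htd : t ≤ d) :
    flipBound d t < flipBound d 0 := by
  rw [flipBound, flipBound, ← sum_Ico_consecutive _ t.zero_le htd, sum_eq_sum_Ico_succ_bot ht]
  simp

theorem levelRank_update_last_le {v : Fin (d + 1) → Bool} (h : v (Fin.last d) = false) :
    (d + 1).choose (weight v) + levelRank (d + 1) (update v (Fin.last d) true)
      ≤ levelRank (d + 1) v + d.choose (d / 2) := by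
  rw [levelRank_of_last_true (update_self ..), Fin.init_update_last, levelRank_of_last_false h,
    weight_of_last_false h]
  have := Nat.choose_le_middle (weight (Fin.init v)) d
  have := Nat.choose_le_choose (weight (Fin.init v)) (Nat.le_add_right d 1)
  omega

theorem levelRank_update_le :
    ∀ {d : ℕ} {v : Fin d → Bool} {t : Fin d}, v t = false →
      d.choose (weight v) + levelRank d (update v t true) ≤ levelRank d v + flipBound d t
  | d + 1, v, t, ht => by
    induction t using Fin.lastCases with
    | last =>
      simpa [flipBound_succ le_rfl, flipBound] using levelRank_update_last_le ht
    | cast t =>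
      have ih := levelRank_update_le (v := Fin.init v) (t := t) ht
      have hlast : update v t.castSucc true (Fin.last d) = v (Fin.last d) :=
        update_of_ne (Fin.castSucc_lt_last t).ne' _ _
      have hinit := weight_update_true (v := Fin.init v) (t := t) ht
      rw [← Fin.init_update_castSucc] at hinit ih
      rw [Fin.val_castSucc, flipBound_succ t.isLt.le]
      have := Nat.choose_le_middle (weight (Fin.init v)) d
      have := Nat.choose_le_middle (weight (Fin.init v) + 1) d
      cases hv : v (Fin.last d)
      · rw [levelRank_of_last_false hv, levelRank_of_last_false (hlast.trans hv), hinit,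
          weight_of_last_false hv, Nat.choose_succ_succ' d]
        have := Nat.choose_le_choose (weight (Fin.init v)) (Nat.le_add_right d 1)
        omega
      · rw [levelRank_of_last_true hv, levelRank_of_last_true (hlast.trans hv),
          weight_of_last_true hv, Nat.choose_succ_succ']
        omega

theorem index_update_le {v : Fin d → Bool} {t : Fin d} (h : v t = false) :
    index d (update v t true) ≤ index d v + flipBound d t := by
  have := levelRank_update_le h
  rw [index, index, weight_update_true h, sum_range_succ]
  omega

theorem dist_index_le_flipBound {v w : Fin d → Bool} {t : Fin d}
    (h : ∀ s, s ≠ t → v s = w s) : Nat.dist (index d v) (index d w) ≤ flipBound d t := by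
  wlog hvw : v t = false ∧ w t = true generalizing v w
  · by_cases heq : v t = w t
    · obtain rfl : v = w := funext fun s => if hs : s = t then hs ▸ heq else h s hs
      simp [Nat.dist_self]
    · rw [Nat.dist_comm]
      refine this (fun s hs => (h s hs).symm) ?_
      revert hvw heq
      cases v t <;> cases w t <;> simp
  obtain rfl : w = update v t true := by
    funext s
    by_cases hs : s = t
    · subst hs; simp [hvw.2]
    · simp [hs, h s hs]
  have hlt := index_lt_index_of_weight_lt (weight_update_true hvw.1).symm.le
  have hle := index_update_le hvw.1
  rw [Nat.dist_eq_sub_of_le hlt.le]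
  omega

end BoolCube

namespace Cell

open BoolCube

variable {d : ℕ} {n : Fin (d + 1) → ℕ}

def parity (c : (i : Fin (d + 1)) → Fin (n i)) : Fin (d + 1) → Bool :=
  fun i => decide ((c i : ℕ) % 2 = 1)

def half (c : (i : Fin (d + 1)) → Fin (n i)) : (i : Fin (d + 1)) → Fin ((n i + 1) / 2) :=
  fun i => ⟨c i / 2, by have := (c i).isLt; omega⟩

def key (c : (i : Fin (d + 1)) → Fin (n i)) : ℕ :=
  index (d + 1) (parity c) * (∏ i, (n i + 1) / 2) + finPiFinEquiv (half c)

theorem key_injective : Injective (key (n := n)) := by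
  intro c c' h
  have hc := (finPiFinEquiv (half c)).isLt
  have hc' := (finPiFinEquiv (half c')).isLt
  have hlow : half c = half c' := finPiFinEquiv.injective <| Fin.ext <| by
    simpa [key, Nat.mul_add_mod_of_lt hc, Nat.mul_add_mod_of_lt hc']
      using congrArg (· % ∏ i, (n i + 1) / 2) h
  have hparity : parity c = parity c' := by
    refine index_injective (Nat.eq_of_mul_eq_mul_right (Nat.zero_lt_of_lt hc) ?_)
    simpa [key, hlow] using h
  funext i
  have h2 := congrArg Fin.val (congrFun hlow i)
  have h1 := congrFun hparity i
  simp only [half, parity, decide_eq_decide] at h1 h2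
  exact Fin.ext (by omega)

theorem dist_key_le {c c' : (i : Fin (d + 1)) → Fin (n i)} (h : sameLine c c') :
    Nat.dist (key c) (key c')
      ≤ flipBound (d + 1) 0 * (∏ i, (n i + 1) / 2) + ((n 0 + 1) / 2 - 1) := by
  obtain ⟨t, ht⟩ := h
  have hindex : Nat.dist (index (d + 1) (parity c)) (index (d + 1) (parity c'))
      ≤ flipBound (d + 1) t :=
    dist_index_le_flipBound fun s hs => by simp [parity, ht s hs]
  refine (Nat.dist_mul_add_le ..).trans ?_
  have := Nat.mul_le_mul_right (∏ i, (n i + 1) / 2) hindex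
  rcases Fin.eq_zero_or_eq_succ t with rfl | ⟨t, rfl⟩
  · rw [Fin.val_zero] at this
    have hlow : Nat.dist (finPiFinEquiv (half c)) (finPiFinEquiv (half c'))
        = Nat.dist (half c 0) (half c' 0) :=
      finPiFinEquiv_dist_of_forall_succ_eq fun i => by simp [half, ht i.succ (Fin.succ_ne_zero i)]
    have := Nat.dist_lt_of_lt_of_lt (half c 0).isLt (half c' 0).isLt
    omega
  · have := Nat.dist_lt_of_lt_of_lt (finPiFinEquiv (half c)).isLt (finPiFinEquiv (half c')).isLt
    have hlt := flipBound_lt_flipBound_zero (Fin.succ_pos t) t.succ.isLt.le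
    have := Nat.mul_le_mul_right (∏ i, (n i + 1) / 2) (Nat.succ_le_of_lt hlt)
    rw [Nat.succ_mul] at this
    omega

theorem exists_equiv_dist_le_of_sameLine (n : Fin (d + 1) → ℕ) :
    ∃ A : ((i : Fin (d + 1)) → Fin (n i)) ≃ Fin (∏ i, n i), ∀ c c', sameLine c c' →
      Nat.dist (A c) (A c')
        ≤ flipBound (d + 1) 0 * (∏ i, (n i + 1) / 2) + ((n 0 + 1) / 2 - 1) := by
  obtain ⟨A, hA⟩ := exists_equiv_fin_dist_le_of_injective
    (by simp [Fintype.card_pi] : Fintype.card ((i : Fin (d + 1)) → Fin (n i)) = ∏ i, n i)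
    (key_injective (n := n))
  exact ⟨A, fun c c' h => (hA c c').trans (dist_key_le h)⟩

end Cell

theorem exists_spread_upper_bound_even_general (d : ℕ) (hd : 1 ≤ d) (n : Fin d → ℕ)
    (heven : Even (n ⟨0, hd⟩)) :
    ∃ A : ((i : Fin d) → Fin (n i)) ≃ Fin (∏ i, n i),
      spread A ≤
        ((Finset.range d).sum fun t => t.choose (t / 2)) * (∏ i, ((n i + 1) / 2)) +
          n ⟨0, hd⟩ / 2 - 1 := by
  obtain ⟨d, rfl⟩ : ∃ d', d = d' + 1 := ⟨d - 1, by omega⟩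
  obtain ⟨A, hA⟩ := Cell.exists_equiv_dist_le_of_sameLine n
  have hzero : (⟨0, hd⟩ : Fin (d + 1)) = 0 := rfl
  have hhalf : (n 0 + 1) / 2 = n 0 / 2 := by
    rw [hzero] at heven
    obtain ⟨k, hk⟩ := heven
    omega
  have hbound : BoolCube.flipBound (d + 1) 0 = ∑ t ∈ range (d + 1), t.choose (t / 2) := by
    rw [BoolCube.flipBound, range_eq_Ico]
  refine ⟨A, spread_le_of_forall_sameLine fun c c' h => ?_⟩
  have := hA c c' h
  -- rules out `n 0 = 0`, where the truncated subtractions in `hA` and in the goal differ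
  have := (c 0).pos
  rw [hzero, ← hbound]
  omega

/-- For monotone positive dimensions with `n 0` (the smallest) even, there is
an arrangement of spread at most
`B(K₂^d) · ∏ ⌈nₜ/2⌉ + n 0 / 2 − 1`, where `B(K₂^d) = Σ_{t=0}^{d−1} C(t, ⌊t/2⌋)`. -/
theorem exists_spread_upper_bound_even (d : ℕ) (hd : 1 ≤ d) (n : Fin d → ℕ)
    (hn : ∀ i, 0 < n i) (hmono : Monotone n)
    (heven : Even (n ⟨0, hd⟩)) :
    ∃ A : ((i : Fin d) → Fin (n i)) ≃ Fin (∏ i, n i),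
      spread A ≤
        ((Finset.range d).sum fun t => t.choose (t / 2)) * (∏ i, ((n i + 1) / 2)) +
          n ⟨0, hd⟩ / 2 - 1 :=
  exists_spread_upper_bound_even_general d hd n heven
end
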